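/- arXiv:2402.03048 — 2 statements merged into one kernel-verified Lean document; each statement's English description precedes it below -/
import Mathlib

section
/- Let n ≥ 1, let K be a real symmetric positive semidefinite n×n matrix, k ∈ ℝⁿ, κ ∈ ℝ, and suppose the bordered (n+1)×(n+1) matrix [[K, k],[kᵀ, κ]] is positive semidefinite. Then for every σ > 0, 0 ≤ κ − kᵀ(K + σ²I)⁻¹k ≤ κ. -/
/-!
Add the noise `σ² I` to the top-left block of the bordered kernel matrix: the result is still
positive semidefinite, and now its top-left block `K + σ² I` is positive definite, so its Schur
complement `κ - kᵀ (K + σ² I)⁻¹ k` is nonnegative. The upper bound is the positivity of the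
quadratic form of `(K + σ² I)⁻¹`.
-/

open Matrix

namespace Matrix

section Ring

variable {m n R : Type*} [Fintype m] [Fintype n] [Ring R] [PartialOrder R] [StarRing R]

theorem PosSemidef.fromBlocks_zero₁₁ {S : Matrix m m R} (hS : S.PosSemidef) :
    (fromBlocks S 0 0 0 : Matrix (m ⊕ n) (m ⊕ n) R).PosSemidef := by
  rw [posSemidef_iff_dotProduct_mulVec] at hS ⊢
  refine ⟨hS.1.fromBlocks (by simp) isHermitian_zero, fun x => ?_⟩
  obtain ⟨x₁, x₂, rfl⟩ : ∃ x₁ x₂, x = Sum.elim x₁ x₂ := ⟨_, _, (Sum.elim_comp_inl_inr x).symm⟩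
  simpa [fromBlocks_mulVec, Function.star_sumElim, sumElim_dotProduct_sumElim] using hS.2 x₁

theorem PosSemidef.fromBlocks_add₁₁ [AddLeftMono R] {A S : Matrix m m R} {B : Matrix m n R}
    {D : Matrix n n R} (h : (fromBlocks A B Bᴴ D).PosSemidef) (hS : S.PosSemidef) :
    (fromBlocks (A + S) B Bᴴ D).PosSemidef := by
  simpa [fromBlocks_add] using h.add (hS.fromBlocks_zero₁₁ (n := n))

end Ring

theorem PosSemidef.schur_complement_add_posDef₁₁ {m n R : Type*} [Fintype m] [Fintype n]
    [DecidableEq m] [Field R] [PartialOrder R] [StarRing R] [StarOrderedRing R]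
    {A S : Matrix m m R} {B : Matrix m n R} {D : Matrix n n R}
    (h : (fromBlocks A B Bᴴ D).PosSemidef) (hS : S.PosDef) :
    (D - Bᴴ * (A + S)⁻¹ * B).PosSemidef := by
  have hAS : (A + S).PosDef := PosDef.posSemidef_add (h.submatrix Sum.inl) hS
  have := hAS.isUnit.invertible
  exact (PosDef.fromBlocks₁₁ B D hAS).mp (h.fromBlocks_add₁₁ hS.posSemidef)

theorem replicateRow_mul_mul_replicateCol {ι m α : Type*} [Fintype m]
    [NonUnitalSemiring α] (v w : m → α) (M : Matrix m m α) :
    replicateRow ι v * M * replicateCol ι w = of fun _ _ => v ⬝ᵥ (M *ᵥ w) := by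
  rw [Matrix.mul_assoc, ← replicateCol_mulVec, replicateRow_mul_replicateCol]

end Matrix

theorem posterior_variance_bounds_general (n : ℕ)
    (K : Matrix (Fin n) (Fin n) ℝ)
    (k : Fin n → ℝ) (κ : ℝ)
    (hbord : (Matrix.fromBlocks K (Matrix.of fun i (_ : Unit) => k i)
        (Matrix.of fun (_ : Unit) j => k j)
        (Matrix.of fun (_ : Unit) (_ : Unit) => κ)).PosSemidef) :
    ∀ σ : ℝ, 0 < σ →
      0 ≤ κ - k ⬝ᵥ ((K + σ ^ 2 • (1 : Matrix (Fin n) (Fin n) ℝ))⁻¹ *ᵥ k) ∧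
      κ - k ⬝ᵥ ((K + σ ^ 2 • (1 : Matrix (Fin n) (Fin n) ℝ))⁻¹ *ᵥ k) ≤ κ := by
  intro σ hσ
  have hnoise : (σ ^ 2 • (1 : Matrix (Fin n) (Fin n) ℝ)).PosDef := PosDef.one.smul (pow_pos hσ 2)
  have hbord' : (fromBlocks K (replicateCol Unit k) (replicateCol Unit k)ᴴ
      (of fun _ _ => κ)).PosSemidef := hbord
  have hpost := (hbord'.schur_complement_add_posDef₁₁ hnoise).diag_nonneg (i := ())
  rw [conjTranspose_replicateCol, replicateRow_mul_mul_replicateCol] at hpost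
  have hK : K.PosSemidef := hbord.submatrix Sum.inl
  have hreduction : 0 ≤ k ⬝ᵥ ((K + σ ^ 2 • (1 : Matrix (Fin n) (Fin n) ℝ))⁻¹ *ᵥ k) := by
    simpa using (PosDef.posSemidef_add hK hnoise).inv.posSemidef.dotProduct_mulVec_nonneg k
  exact ⟨by simpa using hpost, by linarith⟩

/-- The Gaussian process posterior variance `κ - kᵀ (K + σ² I)⁻¹ k` is nonnegative and
never exceeds the prior variance `κ`, provided the bordered kernel matrix is PSD. -/
theorem posterior_variance_bounds (n : ℕ) (hn : 1 ≤ n)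
    (K : Matrix (Fin n) (Fin n) ℝ) (hK : K.PosSemidef)
    (k : Fin n → ℝ) (κ : ℝ)
    (hbord : (Matrix.fromBlocks K (Matrix.of fun i (_ : Unit) => k i)
        (Matrix.of fun (_ : Unit) j => k j)
        (Matrix.of fun (_ : Unit) (_ : Unit) => κ)).PosSemidef) :
    ∀ σ : ℝ, 0 < σ →
      0 ≤ κ - k ⬝ᵥ ((K + σ ^ 2 • (1 : Matrix (Fin n) (Fin n) ℝ))⁻¹ *ᵥ k) ∧
      κ - k ⬝ᵥ ((K + σ ^ 2 • (1 : Matrix (Fin n) (Fin n) ℝ))⁻¹ *ᵥ k) ≤ κ :=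
  posterior_variance_bounds_general n K k κ hbord
end

section
/- Let n ≥ 1, let K be a real symmetric positive semidefinite n×n matrix, k ∈ ℝⁿ, κ > 0, and suppose the bordered (n+1)×(n+1) matrix [[K, k],[kᵀ, κ]] is positive semidefinite. Then for every σ > 0, κ − kᵀ(K + σ²I)⁻¹k > 0. -/
open Matrix

/-!
Put `M = K + σ² I`, which is positive definite, and `v = M⁻¹ k`, so that `K v = k - σ² v`.
Evaluating the quadratic form of the bordered matrix at `(-v, 1)` gives
`0 ≤ vᵀ K v - 2 kᵀ v + κ = κ - kᵀ v - σ² ‖v‖²`, hence `κ - kᵀ M⁻¹ k ≥ σ² ‖v‖²`.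
This is positive when `v ≠ 0`, and equals `κ > 0` when `v = 0`.
-/

section Bordered

variable {ι R : Type*} [Fintype ι]

theorem dotProduct_fromBlocks_bordered_mulVec [CommRing R] (K : Matrix ι ι R) (k : ι → R)
    (κ : R) (v : ι → R) :
    Sum.elim (-v) (fun _ : Unit => 1) ⬝ᵥ
        (fromBlocks K (Matrix.of fun i (_ : Unit) => k i) (Matrix.of fun (_ : Unit) j => k j)
          (Matrix.of fun (_ : Unit) (_ : Unit) => κ)) *ᵥ Sum.elim (-v) (fun _ => 1) =
      v ⬝ᵥ K *ᵥ v - 2 * (k ⬝ᵥ v) + κ := by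
  have hcol : (of fun i (_ : Unit) => k i) *ᵥ (fun _ => 1) = k := by
    ext; simp [mulVec, dotProduct]
  have hrow : (of fun (_ : Unit) j => k j) *ᵥ v = fun _ => k ⬝ᵥ v := rfl
  have hcorner : (of fun (_ : Unit) (_ : Unit) => κ) *ᵥ (fun _ => 1) = fun _ => κ := by
    ext; simp [mulVec, dotProduct]
  simp only [fromBlocks_mulVec, Sum.elim_comp_inl, Sum.elim_comp_inr, hcol, hrow, hcorner,
    sumElim_dotProduct_sumElim, mulVec_neg, neg_dotProduct, dotProduct_add, dotProduct_neg]
  rw [dotProduct_comm v k]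
  simp only [dotProduct, Finset.univ_unique, Finset.sum_singleton, one_mul]
  ring

theorem two_mul_dotProduct_le_of_posSemidef_bordered (K : Matrix ι ι ℝ) (k : ι → ℝ) (κ : ℝ)
    (hbord : (fromBlocks K (Matrix.of fun i (_ : Unit) => k i)
        (Matrix.of fun (_ : Unit) j => k j) (Matrix.of fun (_ : Unit) (_ : Unit) => κ)).PosSemidef)
    (v : ι → ℝ) :
    2 * (k ⬝ᵥ v) ≤ v ⬝ᵥ K *ᵥ v + κ := by
  have := hbord.dotProduct_mulVec_nonneg (Sum.elim (-v) fun _ => 1)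
  rw [star_trivial, dotProduct_fromBlocks_bordered_mulVec] at this
  linarith

end Bordered

theorem mulVec_inv_add_smul_one_mulVec {ι R : Type*} [Fintype ι] [DecidableEq ι] [CommRing R]
    {K : Matrix ι ι R} {c : R} (h : IsUnit (K + c • 1)) (k : ι → R) :
    K *ᵥ ((K + c • 1)⁻¹ *ᵥ k) = k - c • ((K + c • 1)⁻¹ *ᵥ k) := by
  have hinv : (K + c • 1) *ᵥ ((K + c • 1)⁻¹ *ᵥ k) = k := by
    rw [mulVec_mulVec, mul_nonsing_inv _ ((isUnit_iff_isUnit_det _).mp h), one_mulVec]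
  rw [add_mulVec, smul_mulVec, one_mulVec] at hinv
  exact eq_sub_of_add_eq hinv

theorem posterior_variance_pos_general (n : ℕ)
    (K : Matrix (Fin n) (Fin n) ℝ) (hK : K.PosSemidef)
    (k : Fin n → ℝ) (κ : ℝ) (hκ : 0 < κ)
    (hbord : (Matrix.fromBlocks K (Matrix.of fun i (_ : Unit) => k i)
        (Matrix.of fun (_ : Unit) j => k j)
        (Matrix.of fun (_ : Unit) (_ : Unit) => κ)).PosSemidef) :
    ∀ σ : ℝ, 0 < σ →
      0 < κ - k ⬝ᵥ ((K + σ ^ 2 • (1 : Matrix (Fin n) (Fin n) ℝ))⁻¹ *ᵥ k) := by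
  intro σ hσ
  have hM : (K + σ ^ 2 • (1 : Matrix (Fin n) (Fin n) ℝ)).PosDef :=
    PosDef.posSemidef_add hK (PosDef.one.smul (by positivity))
  set v := (K + σ ^ 2 • (1 : Matrix (Fin n) (Fin n) ℝ))⁻¹ *ᵥ k
  have hquad := two_mul_dotProduct_le_of_posSemidef_bordered K k κ hbord v
  rw [mulVec_inv_add_smul_one_mulVec hM.isUnit, dotProduct_sub, dotProduct_smul, smul_eq_mul,
    dotProduct_comm v k] at hquad
  rcases eq_or_ne v 0 with hv | hv
  · simpa [hv] using hκ
  · have hvv : 0 < v ⬝ᵥ v := by simpa using dotProduct_self_star_pos_iff.mpr hv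
    linarith [mul_pos (pow_pos hσ 2) hvv]

/-- With observation noise `σ > 0` and positive prior variance `κ > 0`, the Gaussian
process posterior variance `κ - kᵀ (K + σ² I)⁻¹ k` is strictly positive. -/
theorem posterior_variance_pos (n : ℕ) (hn : 1 ≤ n)
    (K : Matrix (Fin n) (Fin n) ℝ) (hK : K.PosSemidef)
    (k : Fin n → ℝ) (κ : ℝ) (hκ : 0 < κ)
    (hbord : (Matrix.fromBlocks K (Matrix.of fun i (_ : Unit) => k i)
        (Matrix.of fun (_ : Unit) j => k j)
        (Matrix.of fun (_ : Unit) (_ : Unit) => κ)).PosSemidef) :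
    ∀ σ : ℝ, 0 < σ →
      0 < κ - k ⬝ᵥ ((K + σ ^ 2 • (1 : Matrix (Fin n) (Fin n) ℝ))⁻¹ *ᵥ k) :=
  posterior_variance_pos_general n K hK k κ hκ hbord
end
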